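/- In the canonical problems model, with P^c = 𝒫(Prop), ⊕^c = ∪, and s^c(p) = {A ⊆ Prop : p ∈ A} extended to L_CPL by the standard clauses, for every φ ∈ L_CPL one has s^c(φ) = {A ⊆ Prop : Var(φ) ⊆ A}. In particular s^c is upward closed: A ⊆ B and A ∈ s^c(φ) imply B ∈ s^c(φ). -/
import Mathlib


/-- Formulas of classical propositional logic `L_CPL` over a countable set
of atomic propositions (represented by natural numbers). -/
inductive CPL : Type
  | top : CPL
  | atom : ℕ → CPL
  | neg : CPL → CPL
  | or : CPL → CPL → CPL
  | and : CPL → CPL → CPL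
  deriving DecidableEq

/-- `Var(φ)`: the (finite) set of atomic propositions occurring in `φ`. -/
def CPL.var : CPL → Finset ℕ
  | .top => ∅
  | .atom p => {p}
  | .neg φ => φ.var
  | .or φ ψ => φ.var ∪ ψ.var
  | .and φ ψ => φ.var ∪ ψ.var

/-- The canonical solution assignment `s^c` on `P^c = 𝒫(Prop)` with fusion
`∪`: `s^c(p) = {A ⊆ Prop : p ∈ A}` for atoms, `s^c(⊤) = P^c`,
`s^c(¬φ) = s^c(φ)`, `s^c(φ ∨ ψ) = s^c(φ) ∩ s^c(ψ)`,
`s^c(φ ∧ ψ) = {A ∪ B | A ∈ s^c(φ), B ∈ s^c(ψ)}`. -/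
def solC : CPL → Set (Set ℕ)
  | .top => Set.univ
  | .atom p => {A | p ∈ A}
  | .neg φ => solC φ
  | .or φ ψ => solC φ ∩ solC ψ
  | .and φ ψ => {C | ∃ A ∈ solC φ, ∃ B ∈ solC ψ, C = A ∪ B}


lemma solC_eq (φ : CPL) : solC φ = {A : Set ℕ | ∀ p ∈ φ.var, p ∈ A} := by
  induction φ with
  | top => ext A; simp [solC, CPL.var]
  | atom p => ext A; simp [solC, CPL.var]
  | neg φ ih => simpa [solC, CPL.var] using ih
  | or φ ψ ih1 ih2 =>
    ext A
    simp [solC, CPL.var, ih1, ih2]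
    exact ⟨fun ⟨h1,h2⟩ p hp => hp.elim (h1 p) (h2 p), fun h => ⟨fun p hp => h p (Or.inl hp), fun p hp => h p (Or.inr hp)⟩⟩
  | and φ ψ ih1 ih2 =>
    ext C
    simp only [solC, CPL.var, ih1, ih2, Set.mem_setOf_eq, Finset.mem_union]
    constructor
    · rintro ⟨A, hA, B, hB, rfl⟩ p hp
      rcases hp with hp | hp
      · exact Or.inl (hA p hp)
      · exact Or.inr (hB p hp)
    · intro h
      exact ⟨C, fun p hp => h p (Or.inl hp), C, fun p hp => h p (Or.inr hp), (Set.union_self C).symm⟩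

/-- In the canonical problems model,
`s^c(φ) = {A ⊆ Prop : Var(φ) ⊆ A}` for every `φ ∈ L_CPL`; in particular,
`s^c` is upward closed. -/
theorem solC_eq_var_subset :
    (∀ φ : CPL, solC φ = {A : Set ℕ | ∀ p ∈ φ.var, p ∈ A}) ∧
    (∀ (φ : CPL) (A B : Set ℕ), A ⊆ B → A ∈ solC φ → B ∈ solC φ) := by
  refine ⟨solC_eq, fun φ A B hAB hA => ?_⟩
  rw [solC_eq] at *
  exact fun p hp => hAB (hA p hp)
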